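/- Let $0 < \gamma < 1$, $\rho \in (-1, 1)$, and set $\delta = (1-\gamma)/(1-\gamma+\rho^2\gamma)$. Let $\lambda, c, d : \mathbb{R} \to \mathbb{R}$ be given functions. Let $f : \mathbb{R} \times \mathbb{R} \to \mathbb{R}$, and suppose at the point $(t, y)$ the partial derivatives $f_t = \partial_t f$, $f_y = \partial_y f$, $f_{yy} = \partial^2_{yy} f$ exist, $f(t,y) > 0$, and $f$ satisfies the linear parabolic equation $f_t + \tfrac{1}{2} d(y)^2 f_{yy} + \big( c(y) + \frac{\rho\gamma\lambda(y) d(y)}{1-\gamma} \big) f_y + \frac{\gamma\, \lambda(y)^2}{2\delta(1-\gamma)}\, f(t,y) = 0$ at $(t,y)$. Define $v(t,x,y) = \frac{x^\gamma}{\gamma} f(t,y)^\delta$. Then for every $x > 0$, $v$ satisfies the fully nonlinear Hamilton–Jacobi–Bellman equation $\partial_t v + \tfrac{1}{2} d(y)^2\, \partial^2_{yy} v + c(y)\, \partial_y v - \frac{\big(\lambda(y)\, \partial_x v + \rho\, d(y)\, \partial_x \partial_y v\big)^2}{2\, \partial^2_{xx} v} = 0$ at $(t,x,y)$, and $\partial^2_{xx}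 v(t,x,y) \ne 0$ so the quotient is well defined. -/

import Mathlib

/-!
Each partial derivative of `v = x^γ/γ · f^δ` is explicit in `f, f_t, f_y, f_yy`. Substituting them,
the HJB residual equals `x^γ δ f^(δ-1)/γ` times the left side of the linear PDE for `f`: the
`f_y²` terms cancel precisely because `δ (1 - γ + ρ²γ) = 1 - γ`, which is how `δ` is chosen.
-/
open Filter Topology

theorem deriv_rpow_const_of_eventually_pos {f : ℝ → ℝ} {z p : ℝ} (hf : ∀ᶠ w in 𝓝 z, 0 < f w)
    (hp : p ≠ 0) : deriv (fun w => f w ^ p) z = p * f z ^ (p - 1) * deriv f z := by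
  have hz : 0 < f z := hf.self_of_nhds
  by_cases hdiff : DifferentiableAt ℝ f z
  · rw [(hdiff.hasDerivAt.rpow_const (Or.inl hz.ne')).deriv]
    ring
  · -- `f = (f ^ p) ^ p⁻¹` near `z`, so both derivatives take the junk value `0`.
    have hdiff_pow : ¬ DifferentiableAt ℝ (fun w => f w ^ p) z := fun h => hdiff <|
      (h.rpow_const (Or.inl (Real.rpow_pos_of_pos hz p).ne')).congr_of_eventuallyEq <| by
        filter_upwards [hf] with w hw
        rw [← Real.rpow_mul hw.le, mul_inv_cancel₀ hp, Real.rpow_one]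
    rw [deriv_zero_of_not_differentiableAt hdiff,
      deriv_zero_of_not_differentiableAt hdiff_pow, mul_zero]

theorem hasDerivAt_deriv_rpow_const {f : ℝ → ℝ} {f' f'' y p : ℝ}
    (hf : HasDerivAt f f' y) (hf' : HasDerivAt (deriv f) f'' y) (hy : 0 < f y) (hp : p ≠ 0) :
    HasDerivAt (deriv fun z => f z ^ p)
      (p * ((p - 1) * f y ^ (p - 2) * f' ^ 2 + f y ^ (p - 1) * f'')) y := by
  have hpos : ∀ᶠ z in 𝓝 y, 0 < f z := hf.continuousAt.eventually (lt_mem_nhds hy)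
  have hderiv : deriv (fun z => f z ^ p) =ᶠ[𝓝 y] fun z => p * f z ^ (p - 1) * deriv f z := by
    filter_upwards [hpos.eventually_nhds] with z hz
    exact deriv_rpow_const_of_eventually_pos hz hp
  have h := ((hf.rpow_const (p := p - 1) (Or.inl hy.ne')).const_mul p).mul hf'
  refine (h.congr_of_eventuallyEq hderiv).congr_deriv ?_
  rw [hf.deriv, sub_sub, one_add_one_eq_two]
  ring

theorem hasDerivAt_rpow_div_self {x γ : ℝ} (hx : x ≠ 0) (hγ : γ ≠ 0) :
    HasDerivAt (fun w => w ^ γ / γ) (x ^ (γ - 1)) x :=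
  ((Real.hasDerivAt_rpow_const (Or.inl hx)).div_const γ).congr_deriv (mul_div_cancel_left₀ _ hγ)

theorem hjb_residual_eq {γ ρ δ x F ft fy fyy lam c d : ℝ} (hγ0 : γ ≠ 0) (hγ1 : γ ≠ 1)
    (hδ0 : δ ≠ 0) (hδ : δ * (1 - γ + ρ ^ 2 * γ) = 1 - γ) (hx : 0 < x) (hF : 0 < F) :
    x ^ γ / γ * (ft * δ * F ^ (δ - 1))
        + 1 / 2 * d ^ 2 * (x ^ γ / γ * (δ * ((δ - 1) * F ^ (δ - 2) * fy ^ 2 + F ^ (δ - 1) * fyy)))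
        + c * (x ^ γ / γ * (fy * δ * F ^ (δ - 1)))
        - (lam * (x ^ (γ - 1) * F ^ δ) + ρ * d * (x ^ (γ - 1) * (fy * δ * F ^ (δ - 1)))) ^ 2
          / (2 * ((γ - 1) * x ^ (γ - 1 - 1) * F ^ δ))
      = x ^ γ / γ * δ * F ^ (δ - 1) * (ft + 1 / 2 * d ^ 2 * fyy
          + (c + ρ * γ * lam * d / (1 - γ)) * fy + γ * lam ^ 2 / (2 * δ * (1 - γ)) * F) := by
  simp only [Real.rpow_sub hx, Real.rpow_sub hF, Real.rpow_one, Real.rpow_two]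
  field_simp
  linear_combination (-(δ * d ^ 2 * fy ^ 2 * (1 - γ))) * hδ

theorem hjb_verification_general (γ ρ δ : ℝ) (hγ0 : 0 < γ) (hγ1 : γ < 1)
    (hδ : δ = (1 - γ) / (1 - γ + ρ ^ 2 * γ))
    (lam c d : ℝ → ℝ) (f : ℝ → ℝ → ℝ) (t y : ℝ) (ft fy fyy : ℝ)
    (hft : HasDerivAt (fun s => f s y) ft t)
    (hfy : HasDerivAt (fun z => f t z) fy y)
    (hfyy : HasDerivAt (fun z => deriv (fun w => f t w) z) fyy y)
    (hf0 : 0 < f t y)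
    (hpde : ft + 1 / 2 * (d y) ^ 2 * fyy
        + (c y + ρ * γ * lam y * d y / (1 - γ)) * fy
        + γ * (lam y) ^ 2 / (2 * δ * (1 - γ)) * f t y = 0)
    (v : ℝ → ℝ → ℝ → ℝ)
    (hv : v = fun s x z => x ^ γ / γ * (f s z) ^ δ) :
    ∀ x : ℝ, 0 < x →
      ∃ vt vy vyy vx vxy vxx : ℝ,
        HasDerivAt (fun s => v s x y) vt t ∧
        HasDerivAt (fun z => v t x z) vy y ∧
        HasDerivAt (fun z => deriv (fun w => v t x w) z) vyy y ∧
        HasDerivAt (fun w => v t w y) vx x ∧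
        HasDerivAt (fun w => deriv (fun z => v t w z) y) vxy x ∧
        HasDerivAt (fun w => deriv (fun w' => v t w' y) w) vxx x ∧
        vxx ≠ 0 ∧
        vt + 1 / 2 * (d y) ^ 2 * vyy + c y * vy
            - (lam y * vx + ρ * d y * vxy) ^ 2 / (2 * vxx) = 0 := by
  intro x hx
  subst hv
  have hD : 0 < 1 - γ + ρ ^ 2 * γ := by have := sub_pos.mpr hγ1; positivity
  have hδ0 : 0 < δ := hδ ▸ div_pos (sub_pos.mpr hγ1) hD
  have hδD : δ * (1 - γ + ρ ^ 2 * γ) = 1 - γ := by rw [hδ, div_mul_cancel₀ _ hD.ne']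
  have hfδ := hfy.rpow_const (p := δ) (Or.inl hf0.ne')
  have hvyy : HasDerivAt (fun z => deriv (fun w => x ^ γ / γ * f t w ^ δ) z)
      (x ^ γ / γ * (δ * ((δ - 1) * f t y ^ (δ - 2) * fy ^ 2 + f t y ^ (δ - 1) * fyy))) y := by
    simp only [deriv_const_mul_field']
    exact (hasDerivAt_deriv_rpow_const hfy hfyy hf0 hδ0.ne').const_mul _
  have hvxy : HasDerivAt (fun w => deriv (fun z => w ^ γ / γ * f t z ^ δ) y)
      (x ^ (γ - 1) * (fy * δ * f t y ^ (δ - 1))) x := by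
    simp only [deriv_const_mul_field', hfδ.deriv]
    exact (hasDerivAt_rpow_div_self hx.ne' hγ0.ne').mul_const _
  have hvxx : HasDerivAt (fun w => deriv (fun w' => w' ^ γ / γ * f t y ^ δ) w)
      ((γ - 1) * x ^ (γ - 1 - 1) * f t y ^ δ) x := by
    simp only [deriv_mul_const_field', deriv_div_const, Real.deriv_rpow_const,
      mul_div_cancel_left₀ _ hγ0.ne']
    exact (Real.hasDerivAt_rpow_const (Or.inl hx.ne')).mul_const _
  refine ⟨_, _, _, _, _, _, (hft.rpow_const (Or.inl hf0.ne')).const_mul _, hfδ.const_mul _, hvyy,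
    (hasDerivAt_rpow_div_self hx.ne' hγ0.ne').mul_const _, hvxy, hvxx, ?_, ?_⟩
  · exact mul_ne_zero (mul_ne_zero (sub_ne_zero.mpr hγ1.ne) (Real.rpow_pos_of_pos hx _).ne')
      (Real.rpow_pos_of_pos hf0 _).ne'
  · rw [hjb_residual_eq hγ0.ne' hγ1.ne hδ0.ne' hδD hx hf0, hpde, mul_zero]

/-- **Verification step of the finance example (Section 4 of the paper).**
Let `0 < γ < 1`, `ρ ∈ (-1,1)`, `δ = (1-γ)/(1-γ+ρ²γ)`, and suppose `f(t,y) > 0`,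
the partial derivatives `f_t, f_y, f_yy` of `f` exist at `(t,y)`, and `f`
satisfies the linear parabolic equation
`f_t + ½ d(y)² f_yy + (c(y) + ργλ(y)d(y)/(1-γ)) f_y + γλ(y)² f/(2δ(1-γ)) = 0`
at `(t,y)`.  Then for every `x > 0` the function `v(t,x,y) = (x^γ/γ) f(t,y)^δ`
satisfies the fully nonlinear Hamilton–Jacobi–Bellman equation
`v_t + ½ d(y)² v_yy + c(y) v_y - (λ(y) v_x + ρ d(y) v_xy)²/(2 v_xx) = 0`
at `(t,x,y)`, with `v_xx ≠ 0` so the quotient is well defined. -/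
theorem hjb_verification (γ ρ δ : ℝ) (hγ0 : 0 < γ) (hγ1 : γ < 1)
    (hρl : -1 < ρ) (hρr : ρ < 1)
    (hδ : δ = (1 - γ) / (1 - γ + ρ ^ 2 * γ))
    (lam c d : ℝ → ℝ) (f : ℝ → ℝ → ℝ) (t y : ℝ) (ft fy fyy : ℝ)
    (hft : HasDerivAt (fun s => f s y) ft t)
    (hfy : HasDerivAt (fun z => f t z) fy y)
    (hfyy : HasDerivAt (fun z => deriv (fun w => f t w) z) fyy y)
    (hf0 : 0 < f t y)
    (hpde : ft + 1 / 2 * (d y) ^ 2 * fyy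
        + (c y + ρ * γ * lam y * d y / (1 - γ)) * fy
        + γ * (lam y) ^ 2 / (2 * δ * (1 - γ)) * f t y = 0)
    (v : ℝ → ℝ → ℝ → ℝ)
    (hv : v = fun s x z => x ^ γ / γ * (f s z) ^ δ) :
    ∀ x : ℝ, 0 < x →
      ∃ vt vy vyy vx vxy vxx : ℝ,
        HasDerivAt (fun s => v s x y) vt t ∧
        HasDerivAt (fun z => v t x z) vy y ∧
        HasDerivAt (fun z => deriv (fun w => v t x w) z) vyy y ∧
        HasDerivAt (fun w => v t w y) vx x ∧
        HasDerivAt (fun w => deriv (fun z => v t w z) y) vxy x ∧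
        HasDerivAt (fun w => deriv (fun w' => v t w' y) w) vxx x ∧
        vxx ≠ 0 ∧
        vt + 1 / 2 * (d y) ^ 2 * vyy + c y * vy
            - (lam y * vx + ρ * d y * vxy) ^ 2 / (2 * vxx) = 0 :=
  hjb_verification_general γ ρ δ hγ0 hγ1 hδ lam c d f t y ft fy fyy hft hfy hfyy hf0 hpde v hv
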